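/- arXiv:2312.10541 — 2 statements merged into one kernel-verified Lean document; each statement's English description precedes it below -/
import Mathlib

section
/- Let N = (κ, ν) be a mixed binomial process on a measurable space (E, 𝓔), where the counting distribution κ has finite mean c and finite variance δ². Suppose there exist disjoint measurable sets A₀ and B₀ with ν(A₀) > 0 and ν(B₀) > 0. Then N is orthogonal — i.e., N(A) and N(B) are uncorrelated for every pair of disjoint measurable sets A, B — if and only if δ² = c. -/
/-!
Conditioning on the count `K`, which is independent of the `Xᵢ`, reduces the moments of
`N f = ∑_{i<K} f (Xᵢ)` to those of sums of fixed length. Since `E[f (Xᵢ) g (Xⱼ)]` is `ν(f g)`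
for `i = j` and `ν(f) ν(g)` otherwise, `E[N f] = c ν(f)` and
`E[N f · N g] = c ν(f g) + (E K² - c) ν(f) ν(g)`, so
`Cov(N f, N g) = c ν(f g) + (δ² - c) ν(f) ν(g)`. For indicators of disjoint sets the first term
vanishes, leaving `ν(A) ν(B) (δ² - c)`, and one pair with `ν(A₀) ν(B₀) > 0` forces `δ² = c`.
-/

open MeasureTheory ProbabilityTheory

/-- The covariance of two real-valued random variables:
`Cov(X, Y) = E[(X − E X)(Y − E Y)]`. -/
noncomputable def cov {Ω : Type*} [MeasurableSpace Ω] (X Y : Ω → ℝ) (μ : Measure Ω) : ℝ :=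
  ∫ ω, (X ω - ∫ ω', X ω' ∂μ) * (Y ω - ∫ ω', Y ω' ∂μ) ∂μ

theorem sum_range_sum_range_ite_eq {R : Type*} [CommRing R] (a b : R) (k : ℕ) :
    ∑ i ∈ Finset.range k, ∑ j ∈ Finset.range k, (if i = j then a else b)
      = k * a + ((k : R) ^ 2 - k) * b := by
  have hsplit : ∀ i j : ℕ, (if i = j then a else b) = b + if i = j then a - b else 0 := by
    intro i j; split_ifs <;> ring
  simp_rw [hsplit, Finset.sum_add_distrib, Finset.sum_ite_eq,
    Finset.sum_ite_of_true fun _ hi => hi]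
  simp only [Finset.sum_const, Finset.card_range, nsmul_eq_mul]
  ring

namespace ProbabilityTheory

variable {Ω α β : Type*} [MeasurableSpace Ω] [MeasurableSpace α] [MeasurableSpace β]
  {P : Measure Ω} [IsProbabilityMeasure P]

theorem IndepFun.integral_comp_eq_integral_integral {U : Ω → α} {V : Ω → β}
    (hUV : IndepFun U V P) (hU : Measurable U) (hV : Measurable V) {H : α → β → ℝ}
    (hH : Measurable (Function.uncurry H)) (hint : Integrable (fun ω => H (U ω) (V ω)) P) :
    ∫ ω, H (U ω) (V ω) ∂P = ∫ ω, ∫ ω', H (U ω) (V ω') ∂P ∂P := by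
  have hmap : P.map (fun ω => (U ω, V ω)) = (P.map U).prod (P.map V) :=
    (indepFun_iff_map_prod_eq_prod_map_map hU.aemeasurable hV.aemeasurable).mp hUV
  have hUV : AEMeasurable (fun ω => (U ω, V ω)) P := (hU.prodMk hV).aemeasurable
  have hint' : Integrable (Function.uncurry H) ((P.map U).prod (P.map V)) := by
    rw [← hmap, integrable_map_measure hH.aestronglyMeasurable hUV]
    exact hint
  have hinner : StronglyMeasurable (fun a => ∫ b, H a b ∂P.map V) :=
    hH.stronglyMeasurable.integral_prod_right'
  calc ∫ ω, H (U ω) (V ω) ∂P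
      = ∫ p, Function.uncurry H p ∂(P.map U).prod (P.map V) := by
        rw [← hmap, integral_map hUV hH.aestronglyMeasurable]; rfl
    _ = ∫ a, ∫ b, H a b ∂P.map V ∂P.map U := integral_prod _ hint'
    _ = ∫ ω, ∫ ω', H (U ω) (V ω') ∂P ∂P := by
        rw [integral_map hU.aemeasurable hinner.aestronglyMeasurable]
        congr with a
        exact integral_map hV.aemeasurable (hH.comp measurable_prodMk_left).aestronglyMeasurable

end ProbabilityTheory

section IdenticallyDistributed

variable {Ω E : Type*} [MeasurableSpace Ω] [MeasurableSpace E] {P : Measure Ω} {ν : Measure E}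

theorem integrable_comp_of_map_eq {Y : Ω → E} (hY : AEMeasurable Y P) (hlaw : P.map Y = ν)
    {f : E → ℝ} (hf : Integrable f ν) : Integrable (fun ω => f (Y ω)) P := by
  subst hlaw
  exact hf.comp_aemeasurable hY

theorem integral_comp_of_map_eq {Y : Ω → E} (hY : AEMeasurable Y P) (hlaw : P.map Y = ν)
    {f : E → ℝ} (hf : Integrable f ν) : ∫ ω, f (Y ω) ∂P = ∫ x, f x ∂ν := by
  subst hlaw
  exact (integral_map hY hf.aestronglyMeasurable).symm

variable {X : ℕ → Ω → E}

theorem integral_sum_range_comp (hX : ∀ i, AEMeasurable (X i) P) (hlaw : ∀ i, P.map (X i) = ν)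
    {f : E → ℝ} (hf : Integrable f ν) (k : ℕ) :
    ∫ ω, ∑ i ∈ Finset.range k, f (X i ω) ∂P = k * ∫ x, f x ∂ν := by
  rw [integral_finsetSum _ fun i _ => integrable_comp_of_map_eq (hX i) (hlaw i) hf]
  simp [integral_comp_of_map_eq (hX _) (hlaw _) hf]

theorem indepFun_comp_comp (hX : ∀ i, AEMeasurable (X i) P) (hlaw : ∀ i, P.map (X i) = ν)
    (hpair : Pairwise fun i j => IndepFun (X i) (X j) P) {f g : E → ℝ} (hf : Integrable f ν)
    (hg : Integrable g ν) {i j : ℕ} (hij : i ≠ j) :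
    IndepFun (fun ω => f (X i ω)) (fun ω => g (X j ω)) P :=
  (hpair hij).comp₀ (hX i) (hX j) (by rw [hlaw i]; exact hf.aemeasurable)
    (by rw [hlaw j]; exact hg.aemeasurable)

theorem integrable_comp_mul_comp (hX : ∀ i, AEMeasurable (X i) P) (hlaw : ∀ i, P.map (X i) = ν)
    (hpair : Pairwise fun i j => IndepFun (X i) (X j) P) {f g : E → ℝ} (hf : Integrable f ν)
    (hg : Integrable g ν) (hfg : Integrable (f * g) ν) (i j : ℕ) :
    Integrable (fun ω => f (X i ω) * g (X j ω)) P := by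
  by_cases hij : i = j
  · subst hij
    exact integrable_comp_of_map_eq (hX i) (hlaw i) hfg
  · exact (indepFun_comp_comp hX hlaw hpair hf hg hij).integrable_mul
      (integrable_comp_of_map_eq (hX i) (hlaw i) hf) (integrable_comp_of_map_eq (hX j) (hlaw j) hg)

theorem integral_comp_mul_comp (hX : ∀ i, AEMeasurable (X i) P) (hlaw : ∀ i, P.map (X i) = ν)
    (hpair : Pairwise fun i j => IndepFun (X i) (X j) P) {f g : E → ℝ} (hf : Integrable f ν)
    (hg : Integrable g ν) (hfg : Integrable (f * g) ν) (i j : ℕ) :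
    ∫ ω, f (X i ω) * g (X j ω) ∂P
      = if i = j then ∫ x, f x * g x ∂ν else (∫ x, f x ∂ν) * ∫ x, g x ∂ν := by
  by_cases hij : i = j
  · subst hij
    rw [if_pos rfl]
    exact integral_comp_of_map_eq (hX i) (hlaw i) hfg
  · rw [if_neg hij, ← integral_comp_of_map_eq (hX i) (hlaw i) hf,
      ← integral_comp_of_map_eq (hX j) (hlaw j) hg]
    exact (indepFun_comp_comp hX hlaw hpair hf hg hij).integral_mul_eq_mul_integral
      (integrable_comp_of_map_eq (hX i) (hlaw i) hf).aestronglyMeasurable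
      (integrable_comp_of_map_eq (hX j) (hlaw j) hg).aestronglyMeasurable

theorem integral_sum_range_mul_sum_range_comp (hX : ∀ i, AEMeasurable (X i) P)
    (hlaw : ∀ i, P.map (X i) = ν) (hpair : Pairwise fun i j => IndepFun (X i) (X j) P)
    {f g : E → ℝ} (hf : Integrable f ν) (hg : Integrable g ν) (hfg : Integrable (f * g) ν)
    (k : ℕ) :
    ∫ ω, (∑ i ∈ Finset.range k, f (X i ω)) * (∑ j ∈ Finset.range k, g (X j ω)) ∂P
      = k * ∫ x, f x * g x ∂ν + ((k : ℝ) ^ 2 - k) * ((∫ x, f x ∂ν) * ∫ x, g x ∂ν) := by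
  have hint := integrable_comp_mul_comp hX hlaw hpair hf hg hfg
  simp_rw [Finset.sum_mul_sum]
  rw [integral_finsetSum _ fun i _ => integrable_finsetSum _ fun j _ => hint i j]
  simp_rw [integral_finsetSum _ fun j _ => hint _ j, integral_comp_mul_comp hX hlaw hpair hf hg hfg]
  exact sum_range_sum_range_ite_eq _ _ k

end IdenticallyDistributed

theorem norm_sum_range_le {E : Type*} {f : E → ℝ} {C : ℝ} (hfC : ∀ x, ‖f x‖ ≤ C) (k : ℕ)
    (x : ℕ → E) :
    ‖∑ i ∈ Finset.range k, f (x i)‖ ≤ k * C :=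
  (norm_sum_le _ _).trans <| by
    simpa using Finset.sum_le_sum fun i (_ : i ∈ Finset.range k) => hfC (x i)

section RandomSums

variable {Ω E : Type*} [MeasurableSpace Ω] [MeasurableSpace E] {P : Measure Ω}
  {ν : Measure E} {K : Ω → ℕ} {X : ℕ → Ω → E} {f g : E → ℝ} {C : ℝ}

theorem measurable_uncurry_sum_range (hf : Measurable f) :
    Measurable fun p : ℕ × (ℕ → E) => ∑ i ∈ Finset.range p.1, f (p.2 i) :=
  measurable_from_prod_countable_right fun k =>
    Finset.measurable_sum (Finset.range k) fun i _ => hf.comp (measurable_pi_apply i)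

theorem memLp_sum_range_comp (hK : Measurable K) (hX : ∀ i, Measurable (X i))
    (hK2 : MemLp (fun ω => (K ω : ℝ)) 2 P) (hf : Measurable f) (hfC : ∀ x, ‖f x‖ ≤ C) :
    MemLp (fun ω => ∑ i ∈ Finset.range (K ω), f (X i ω)) 2 P :=
  (hK2.mul_const C).of_le ((measurable_uncurry_sum_range hf).comp
      (hK.prodMk (measurable_pi_lambda _ hX))).aestronglyMeasurable
    (ae_of_all _ fun ω => (norm_sum_range_le hfC (K ω) _).trans (le_abs_self _))

theorem integral_sum_range_comp_of_indepFun [IsProbabilityMeasure P] [IsFiniteMeasure ν]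
    (hK : Measurable K) (hX : ∀ i, Measurable (X i)) (hlaw : ∀ i, P.map (X i) = ν)
    (hindep : IndepFun K (fun ω i => X i ω) P) (hK2 : MemLp (fun ω => (K ω : ℝ)) 2 P)
    (hf : Measurable f) (hfC : ∀ x, ‖f x‖ ≤ C) :
    ∫ ω, ∑ i ∈ Finset.range (K ω), f (X i ω) ∂P = (∫ ω, (K ω : ℝ) ∂P) * ∫ x, f x ∂ν := by
  have hfi : Integrable f ν := .of_bound hf.aestronglyMeasurable C (ae_of_all _ hfC)
  rw [hindep.integral_comp_eq_integral_integral (H := fun k x => ∑ i ∈ Finset.range k, f (x i))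
    hK (measurable_pi_lambda _ hX) (measurable_uncurry_sum_range hf)
    ((memLp_sum_range_comp hK hX hK2 hf hfC).integrable one_le_two)]
  simp_rw [integral_sum_range_comp (fun i => (hX i).aemeasurable) hlaw hfi]
  exact integral_mul_const _ _

theorem integral_sum_range_mul_sum_range_comp_of_indepFun [IsProbabilityMeasure P]
    [IsFiniteMeasure ν] (hK : Measurable K) (hX : ∀ i, Measurable (X i))
    (hlaw : ∀ i, P.map (X i) = ν) (hpair : Pairwise fun i j => IndepFun (X i) (X j) P)
    (hindep : IndepFun K (fun ω i => X i ω) P) (hK2 : MemLp (fun ω => (K ω : ℝ)) 2 P)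
    {D : ℝ} (hf : Measurable f) (hfC : ∀ x, ‖f x‖ ≤ C) (hg : Measurable g)
    (hgD : ∀ x, ‖g x‖ ≤ D) :
    ∫ ω, (∑ i ∈ Finset.range (K ω), f (X i ω)) * (∑ j ∈ Finset.range (K ω), g (X j ω)) ∂P
      = (∫ ω, (K ω : ℝ) ∂P) * ∫ x, f x * g x ∂ν
        + ((∫ ω, (K ω : ℝ) ^ 2 ∂P) - ∫ ω, (K ω : ℝ) ∂P) * ((∫ x, f x ∂ν) * ∫ x, g x ∂ν) := by
  have hfi : Integrable f ν := .of_bound hf.aestronglyMeasurable C (ae_of_all _ hfC)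
  have hgi : Integrable g ν := .of_bound hg.aestronglyMeasurable D (ae_of_all _ hgD)
  have hfgi : Integrable (f * g) ν := .of_bound (hf.mul hg).aestronglyMeasurable (C * D)
    (ae_of_all _ fun x => (norm_mul_le _ _).trans
      (mul_le_mul (hfC x) (hgD x) (norm_nonneg _) ((norm_nonneg _).trans (hfC x))))
  have hK1 : Integrable (fun ω => (K ω : ℝ)) P := hK2.integrable one_le_two
  rw [hindep.integral_comp_eq_integral_integral (H := fun k x =>
      (∑ i ∈ Finset.range k, f (x i)) * ∑ j ∈ Finset.range k, g (x j))
    hK (measurable_pi_lambda _ hX)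
    ((measurable_uncurry_sum_range hf).mul (measurable_uncurry_sum_range hg))
    ((memLp_sum_range_comp hK hX hK2 hf hfC).integrable_mul
      (memLp_sum_range_comp hK hX hK2 hg hgD))]
  simp_rw [integral_sum_range_mul_sum_range_comp (fun i => (hX i).aemeasurable) hlaw hpair hfi
    hgi hfgi]
  have hK2' : Integrable (fun ω => (K ω : ℝ) ^ 2) P := hK2.integrable_sq
  have hK21 : Integrable (fun ω => (K ω : ℝ) ^ 2 - K ω) P := hK2'.sub hK1
  rw [integral_add (hK1.mul_const _) (hK21.mul_const _), integral_mul_const,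
    integral_mul_const, integral_sub hK2' hK1]

theorem cov_sum_range_comp_of_indepFun [IsProbabilityMeasure P]
    [IsFiniteMeasure ν] (hK : Measurable K) (hX : ∀ i, Measurable (X i))
    (hlaw : ∀ i, P.map (X i) = ν) (hpair : Pairwise fun i j => IndepFun (X i) (X j) P)
    (hindep : IndepFun K (fun ω i => X i ω) P) (hK2 : MemLp (fun ω => (K ω : ℝ)) 2 P)
    {D : ℝ} (hf : Measurable f) (hfC : ∀ x, ‖f x‖ ≤ C) (hg : Measurable g)
    (hgD : ∀ x, ‖g x‖ ≤ D) :
    cov (fun ω => ∑ i ∈ Finset.range (K ω), f (X i ω))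
        (fun ω => ∑ i ∈ Finset.range (K ω), g (X i ω)) P
      = (∫ ω, (K ω : ℝ) ∂P) * ∫ x, f x * g x ∂ν
        + (variance (fun ω => (K ω : ℝ)) P - ∫ ω, (K ω : ℝ) ∂P)
          * ((∫ x, f x ∂ν) * ∫ x, g x ∂ν) := by
  change covariance _ _ P = _
  rw [covariance_eq_sub (memLp_sum_range_comp hK hX hK2 hf hfC)
      (memLp_sum_range_comp hK hX hK2 hg hgD), variance_eq_sub hK2]
  simp only [Pi.mul_apply, Pi.pow_apply]
  rw [integral_sum_range_mul_sum_range_comp_of_indepFun hK hX hlaw hpair hindep hK2 hf hfC hg hgD,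
    integral_sum_range_comp_of_indepFun hK hX hlaw hindep hK2 hf hfC,
    integral_sum_range_comp_of_indepFun hK hX hlaw hindep hK2 hg hgD]
  ring

theorem cov_sum_range_indicator_of_disjoint [IsProbabilityMeasure P] [IsFiniteMeasure ν]
    (hK : Measurable K) (hX : ∀ i, Measurable (X i)) (hlaw : ∀ i, P.map (X i) = ν)
    (hpair : Pairwise fun i j => IndepFun (X i) (X j) P)
    (hindep : IndepFun K (fun ω i => X i ω) P) (hK2 : MemLp (fun ω => (K ω : ℝ)) 2 P)
    {A B : Set E} (hA : MeasurableSet A) (hB : MeasurableSet B) (hAB : Disjoint A B) :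
    cov (fun ω => ∑ i ∈ Finset.range (K ω), A.indicator (1 : E → ℝ) (X i ω))
        (fun ω => ∑ i ∈ Finset.range (K ω), B.indicator (1 : E → ℝ) (X i ω)) P
      = ν.real A * ν.real B * (variance (fun ω => (K ω : ℝ)) P - ∫ ω, (K ω : ℝ) ∂P) := by
  have hbound : ∀ (S : Set E) x, ‖S.indicator (1 : E → ℝ) x‖ ≤ 1 := fun S x =>
    (norm_indicator_le_norm_self _ _).trans (by simp)
  rw [cov_sum_range_comp_of_indepFun hK hX hlaw hpair hindep hK2 (measurable_one.indicator hA)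
    (hbound A) (measurable_one.indicator hB) (hbound B)]
  have hAB0 : ∀ x, A.indicator (1 : E → ℝ) x * B.indicator 1 x = 0 := fun x => by
    rw [← Pi.mul_apply, ← Set.inter_indicator_one, hAB.inter_eq, Set.indicator_empty]
  simp only [hAB0, integral_zero, integral_indicator_one hA, integral_indicator_one hB]
  ring

end RandomSums

/-- **Orthogonality condition.** A mixed binomial process `N = (κ, ν)` with
counting variable `K ~ κ` of finite mean `c` and finite variance `δ²`, such that there exist
disjoint measurable sets `A₀, B₀` of positive `ν`-measure, is orthogonal — i.e. `N(A)` and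
`N(B)` are uncorrelated for every pair of disjoint measurable sets `A, B` — iff `δ² = c`. -/
theorem mixedBinomial_orthogonal_iff
    {Ω : Type*} [MeasurableSpace Ω] (P : Measure Ω) [IsProbabilityMeasure P]
    {E : Type*} [mE : MeasurableSpace E] (ν : Measure E) [IsProbabilityMeasure ν]
    (K : Ω → ℕ) (X : ℕ → Ω → E)
    (hK : Measurable K) (hX : ∀ i, Measurable (X i))
    -- the Xᵢ are iid with common law ν
    (hlaw : ∀ i, Measure.map (X i) P = ν)
    (hiid : iIndepFun X P)
    -- K is independent of the sequence (Xᵢ)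
    (hindep : IndepFun K (fun ω i => X i ω) P)
    -- the counting distribution κ (the law of K) has finite mean and finite variance
    (hK2 : MemLp (fun ω => (K ω : ℝ)) 2 P)
    -- there exist disjoint measurable sets of positive ν-measure
    (hpos : ∃ A₀ B₀ : Set E, MeasurableSet A₀ ∧ MeasurableSet B₀ ∧ Disjoint A₀ B₀ ∧
      0 < ν A₀ ∧ 0 < ν B₀) :
    (∀ A B : Set E, MeasurableSet A → MeasurableSet B → Disjoint A B →
        cov (fun ω => ∑ i ∈ Finset.range (K ω), A.indicator (1 : E → ℝ) (X i ω))
            (fun ω => ∑ i ∈ Finset.range (K ω), B.indicator (1 : E → ℝ) (X i ω)) P = 0)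
      ↔ variance (fun ω => (K ω : ℝ)) P = ∫ ω, (K ω : ℝ) ∂P := by
  have hcov := fun A B (hA : MeasurableSet A) (hB : MeasurableSet B) (hAB : Disjoint A B) =>
    cov_sum_range_indicator_of_disjoint hK hX hlaw (fun _ _ hij => hiid.indepFun hij) hindep hK2
      hA hB hAB
  obtain ⟨A₀, B₀, hA₀, hB₀, hAB₀, hνA₀, hνB₀⟩ := hpos
  constructor
  · intro horth
    have hprod : 0 < ν.real A₀ * ν.real B₀ :=
      mul_pos (ENNReal.toReal_pos hνA₀.ne' (measure_ne_top _ _))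
        (ENNReal.toReal_pos hνB₀.ne' (measure_ne_top _ _))
    have hzero := (hcov A₀ B₀ hA₀ hB₀ hAB₀).symm.trans (horth A₀ B₀ hA₀ hB₀ hAB₀)
    exact sub_eq_zero.mp ((mul_eq_zero.mp hzero).resolve_left hprod.ne')
  · intro hvar A B hA hB hAB
    rw [hcov A B hA hB hAB, hvar, sub_self, mul_zero]
end

section
/- In the randomized controlled trial model, let E = {C, T} with ν{C} = ν{T} = 1/2, let Q be a probability kernel from E to a measurable space (F, 𝓕) with F ⊆ ℝ≥0, with c_T = ∫_F y Q(T, dy) and c_C = ∫_F y Q(C, dy) finite, and let M = (κ, ν×Q) be the mixed binomial process on E×F with counting distribution κ = Dirac(n) for n ∈ ℕ, n ≥ 1 (so δ² = 0, c = n), built from i.i.d. pairs (X_i, Y_i) with X_i ~ ν and Y_i ~ Q(X_i, ·). Then for f_T(x,y) = 1_{{T}}(x)·y and f_C(x,y) = 1_{{C}}(x)·y (assumed square-integrable with respect to ν×Q), Cov(Mf_T, Mf_C) = −(n/4)·c_T·c_C, and consequently Cov((1/n)Mf_T, (1/n)Mf_C) = −c_T·c_C/(4n), which tends to 0 as n →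 ∞. -/
/-!
Expand the covariance of the two sums bilinearly. Independence kills every cross term
`Cov(f_T(Zᵢ), f_C(Zⱼ))` with `i ≠ j`, and each of the `n` diagonal terms equals `Cov(f_T, f_C)`
under `ν ⊗ₘ Q`. Since a subject is in only one group, `f_T · f_C = 0`, so that covariance is
`-E[f_T] E[f_C] = -(ν{T} c_T)(ν{C} c_C) = -c_T c_C / 4`.
-/

open MeasureTheory ProbabilityTheory Filter

lemma cov_eq_covariance {Ω : Type*} [MeasurableSpace Ω] (X Y : Ω → ℝ) (μ : Measure Ω) :
    cov X Y μ = cov[X, Y; μ] := rfl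

namespace ProbabilityTheory

variable {Ω : Type*} [MeasurableSpace Ω] {μ : Measure Ω}

lemma covariance_eq_neg_mul_integral_of_mul_eq_zero [IsProbabilityMeasure μ] {X Y : Ω → ℝ}
    (hX : MemLp X 2 μ) (hY : MemLp Y 2 μ) (hXY : ∀ ω, X ω * Y ω = 0) :
    cov[X, Y; μ] = -(μ[X] * μ[Y]) := by
  rw [covariance_eq_sub hX hY, show X * Y = 0 from funext hXY, Pi.zero_def, integral_zero,
    zero_sub]

theorem iIndepFun.covariance_fun_sum_fun_sum_of_map_eq [IsFiniteMeasure μ]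
    {ι β : Type*} [MeasurableSpace β] {Z : ι → Ω → β} {ρ : Measure β} {f g : β → ℝ}
    (hZ : iIndepFun Z μ) (hZm : ∀ i, AEMeasurable (Z i) μ) (hlaw : ∀ i, μ.map (Z i) = ρ)
    (hf : MemLp f 2 ρ) (hg : MemLp g 2 ρ) (s : Finset ι) :
    cov[fun ω ↦ ∑ i ∈ s, f (Z i ω), fun ω ↦ ∑ i ∈ s, g (Z i ω); μ] = s.card * cov[f, g; ρ] := by
  have hfZ (i : ι) : MemLp (f ∘ Z i) 2 μ := ((hlaw i).symm ▸ hf).comp_of_map (hZm i)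
  have hgZ (i : ι) : MemLp (g ∘ Z i) 2 μ := ((hlaw i).symm ▸ hg).comp_of_map (hZm i)
  have hoff {i j : ι} (hij : i ≠ j) : cov[f ∘ Z i, g ∘ Z j; μ] = 0 :=
    ((hZ.indepFun hij).comp₀ (hZm i) (hZm j) ((hlaw i).symm ▸ hf.aemeasurable)
      ((hlaw j).symm ▸ hg.aemeasurable)).covariance_eq_zero (hfZ i) (hgZ j)
  have hdiag (i : ι) : cov[f ∘ Z i, g ∘ Z i; μ] = cov[f, g; ρ] := by
    rw [← covariance_map ((hlaw i).symm ▸ hf.1) ((hlaw i).symm ▸ hg.1) (hZm i), hlaw i]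
  calc cov[fun ω ↦ ∑ i ∈ s, f (Z i ω), fun ω ↦ ∑ i ∈ s, g (Z i ω); μ]
      = ∑ i ∈ s, ∑ j ∈ s, cov[f ∘ Z i, g ∘ Z j; μ] :=
        covariance_fun_sum_fun_sum' (fun i _ ↦ hfZ i) (fun j _ ↦ hgZ j)
    _ = ∑ i ∈ s, cov[f ∘ Z i, g ∘ Z i; μ] :=
        Finset.sum_congr rfl fun i hi ↦
          Finset.sum_eq_single_of_mem i hi fun j _ hji ↦ hoff (Ne.symm hji)
    _ = s.card * cov[f, g; ρ] := by simp [hdiag]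

end ProbabilityTheory

lemma integral_compProd_bool {β : Type*} [MeasurableSpace β] {ν : Measure Bool}
    [IsFiniteMeasure ν] {Q : Kernel Bool β} [IsSFiniteKernel Q] {f : Bool × β → ℝ}
    (hf : Integrable f (ν ⊗ₘ Q)) :
    ∫ p, f p ∂(ν ⊗ₘ Q) =
      ν.real {true} * ∫ y, f (true, y) ∂(Q true)
        + ν.real {false} * ∫ y, f (false, y) ∂(Q false) := by
  rw [Measure.integral_compProd hf, integral_fintype .of_finite, Fintype.sum_bool]
  simp only [smul_eq_mul]

lemma covariance_treated_control {ν : Measure Bool} [IsProbabilityMeasure ν]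
    {Q : Kernel Bool ℝ} [IsMarkovKernel Q]
    (hfT : MemLp (fun p : Bool × ℝ => if p.1 then p.2 else 0) 2 (ν ⊗ₘ Q))
    (hfC : MemLp (fun p : Bool × ℝ => if p.1 then 0 else p.2) 2 (ν ⊗ₘ Q)) :
    cov[fun p : Bool × ℝ => if p.1 then p.2 else 0, fun p => if p.1 then 0 else p.2; ν ⊗ₘ Q]
      = -(ν.real {true} * ν.real {false}) * (∫ y, y ∂(Q true)) * (∫ y, y ∂(Q false)) := by
  rw [covariance_eq_neg_mul_integral_of_mul_eq_zero hfT hfC (fun p ↦ by cases p.1 <;> simp),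
    integral_compProd_bool (hfT.integrable one_le_two),
    integral_compProd_bool (hfC.integrable one_le_two)]
  simp only [if_true, if_false, Bool.false_eq_true, integral_zero, mul_zero, zero_add, add_zero]
  ring

theorem rct_binomial_covariance_general
    {Ω : Type*} [MeasurableSpace Ω] (P : Measure Ω) [IsProbabilityMeasure P]
    (ν : Measure Bool) [IsProbabilityMeasure ν]
    -- equal group-assignment probabilities: ν{T} = ν{C} = 1/2 (T = true, C = false)
    (hν : ν {true} = 1/2 ∧ ν {false} = 1/2)
    (Q : Kernel Bool ℝ) [IsMarkovKernel Q]
    -- the iid points (Xᵢ, Yᵢ) with common law ν ⊗ₘ Q (counting variable is the constant n)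
    (n : ℕ) (Z : ℕ → Ω → Bool × ℝ)
    (hZ : ∀ i, Measurable (Z i))
    (hZlaw : ∀ i, Measure.map (Z i) P = ν ⊗ₘ Q)
    (hZiid : iIndepFun Z P)
    -- f_T and f_C are square-integrable with respect to ν × Q
    (hfT2 : MemLp (fun p : Bool × ℝ => if p.1 then p.2 else 0) 2 (ν ⊗ₘ Q))
    (hfC2 : MemLp (fun p : Bool × ℝ => if p.1 then 0 else p.2) 2 (ν ⊗ₘ Q)) :
    cov (fun ω => ∑ i ∈ Finset.range n, if (Z i ω).1 then (Z i ω).2 else 0)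
        (fun ω => ∑ i ∈ Finset.range n, if (Z i ω).1 then 0 else (Z i ω).2) P
      = -((n : ℝ)/4) * (∫ y, y ∂(Q true)) * (∫ y, y ∂(Q false))
    ∧ cov (fun ω => (1/(n : ℝ)) * ∑ i ∈ Finset.range n, if (Z i ω).1 then (Z i ω).2 else 0)
          (fun ω => (1/(n : ℝ)) * ∑ i ∈ Finset.range n, if (Z i ω).1 then 0 else (Z i ω).2) P
      = -((∫ y, y ∂(Q true)) * (∫ y, y ∂(Q false))) / (4 * n)
    ∧ Tendsto (fun m : ℕ => -((∫ y, y ∂(Q true)) * (∫ y, y ∂(Q false))) / (4 * m))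
        atTop (nhds 0) := by
  have hhalf : ν.real {true} = 1/2 ∧ ν.real {false} = 1/2 := by
    simp [Measure.real, hν.1, hν.2]
  have hcov : cov (fun ω => ∑ i ∈ Finset.range n, if (Z i ω).1 then (Z i ω).2 else 0)
      (fun ω => ∑ i ∈ Finset.range n, if (Z i ω).1 then 0 else (Z i ω).2) P
      = -((n : ℝ)/4) * (∫ y, y ∂(Q true)) * (∫ y, y ∂(Q false)) := by
    rw [cov_eq_covariance, hZiid.covariance_fun_sum_fun_sum_of_map_eq
      (fun i ↦ (hZ i).aemeasurable) hZlaw hfT2 hfC2, covariance_treated_control hfT2 hfC2,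
      hhalf.1, hhalf.2, Finset.card_range]
    ring
  refine ⟨hcov, ?_, ?_⟩
  · rw [cov_eq_covariance, covariance_const_mul_left, covariance_const_mul_right,
      ← cov_eq_covariance, hcov]
    -- `1 / 0 = 0` makes both sides vanish when `n = 0`
    rcases eq_or_ne (n : ℝ) 0 with hn | hn
    · simp [hn]
    · field_simp
  · simpa only [div_div] using
      tendsto_const_div_atTop_nhds_zero_nat (-((∫ y, y ∂(Q true)) * (∫ y, y ∂(Q false))) / 4)

/-- In the RCT model with `E = {C, T}` (encoded as `Bool`, `T = true`,
`C = false`), equal assignment probabilities `ν{C} = ν{T} = 1/2`, a measurement kernel `Q`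
to nonnegative reals with group means `c_T, c_C`, and the binomial process
`M = (Dirac n, ν × Q)` built from iid pairs `(Xᵢ, Yᵢ) ~ ν ⊗ₘ Q`: for
`f_T(x,y) = 1_{T}(x)·y` and `f_C(x,y) = 1_{C}(x)·y`,
`Cov(Mf_T, Mf_C) = −(n/4)·c_T·c_C`, hence
`Cov((1/n)Mf_T, (1/n)Mf_C) = −c_T·c_C/(4n) → 0` as `n → ∞`. -/
theorem rct_binomial_covariance
    {Ω : Type*} [MeasurableSpace Ω] (P : Measure Ω) [IsProbabilityMeasure P]
    (ν : Measure Bool) [IsProbabilityMeasure ν]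
    -- equal group-assignment probabilities: ν{T} = ν{C} = 1/2 (T = true, C = false)
    (hν : ν {true} = 1/2 ∧ ν {false} = 1/2)
    (Q : Kernel Bool ℝ) [IsMarkovKernel Q]
    -- the measurement space is ℝ≥0: each Q(x, ·) is carried by the nonnegative reals
    (hQpos : ∀ x, ∀ᵐ y ∂(Q x), 0 ≤ y)
    -- group means c_T and c_C are finite
    (hQT : Integrable (fun y => y) (Q true)) (hQC : Integrable (fun y => y) (Q false))
    -- the iid points (Xᵢ, Yᵢ) with common law ν ⊗ₘ Q (counting variable is the constant n)
    (n : ℕ) (hn : 1 ≤ n) (Z : ℕ → Ω → Bool × ℝ)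
    (hZ : ∀ i, Measurable (Z i))
    (hZlaw : ∀ i, Measure.map (Z i) P = ν ⊗ₘ Q)
    (hZiid : iIndepFun Z P)
    -- f_T and f_C are square-integrable with respect to ν × Q
    (hfT2 : MemLp (fun p : Bool × ℝ => if p.1 then p.2 else 0) 2 (ν ⊗ₘ Q))
    (hfC2 : MemLp (fun p : Bool × ℝ => if p.1 then 0 else p.2) 2 (ν ⊗ₘ Q)) :
    cov (fun ω => ∑ i ∈ Finset.range n, if (Z i ω).1 then (Z i ω).2 else 0)
        (fun ω => ∑ i ∈ Finset.range n, if (Z i ω).1 then 0 else (Z i ω).2) P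
      = -((n : ℝ)/4) * (∫ y, y ∂(Q true)) * (∫ y, y ∂(Q false))
    ∧ cov (fun ω => (1/(n : ℝ)) * ∑ i ∈ Finset.range n, if (Z i ω).1 then (Z i ω).2 else 0)
          (fun ω => (1/(n : ℝ)) * ∑ i ∈ Finset.range n, if (Z i ω).1 then 0 else (Z i ω).2) P
      = -((∫ y, y ∂(Q true)) * (∫ y, y ∂(Q false))) / (4 * n)
    ∧ Tendsto (fun m : ℕ => -((∫ y, y ∂(Q true)) * (∫ y, y ∂(Q false))) / (4 * m))
        atTop (nhds 0) :=
  rct_binomial_covariance_general P ν hν Q n Z hZ hZlaw hZiid hfT2 hfC2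
end
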